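/- Let ψ be a bipartite state on S ⊗ T with maximally mixed marginals and maximal correlation ρ < 1. Suppose standard orthonormal bases {S_i}, {T_j} satisfy Tr((S_i ⊗ T_j)ψ) = c_i δ_{ij} with c_0 = 1 and 0 ≤ c_i ≤ ρ for i ≥ 1. Then for Hermitian M, N on n copies with Fourier coefficients M̂(s), N̂(t) in the product bases, |Tr((M ⊗ N)ψ^{⊗n}) − Tr((M^{≤d} ⊗ N^{≤d})ψ^{⊗n})| ≤ ρ^d ⦀M⦀₂ ⦀N⦀₂, where M^{≤d} keeps only Fourier terms with at most d nonzero coordinates. -/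

import Mathlib

open Matrix ComplexOrder

/-- Tensor (Kronecker) product of operators. -/
noncomputable def tensorOp {α β : Type*} (P : Matrix α α ℂ) (Q : Matrix β β ℂ) :
    Matrix (α × β) (α × β) ℂ :=
  fun x y => P x.1 y.1 * Q x.2 y.2

/-- Partial trace over the second factor. -/
noncomputable def ptraceT {α β : Type*} [Fintype β]
    (ψ : Matrix (α × β) (α × β) ℂ) : Matrix α α ℂ :=
  fun i j => ∑ k : β, ψ (i, k) (j, k)

/-- Partial trace over the first factor. -/
noncomputable def ptraceS {α β : Type*} [Fintype α]
    (ψ : Matrix (α × β) (α × β) ℂ) : Matrix β β ℂ :=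
  fun i j => ∑ k : α, ψ (k, i) (k, j)

/-- The `n`-fold tensor power `ψ^{⊗n}` of a bipartite operator on `S ⊗ T`, regarded as a
bipartite operator on `S^{⊗n} ⊗ T^{⊗n}`. -/
noncomputable def tensorPow {s t n : ℕ} (ψ : Matrix (Fin s × Fin t) (Fin s × Fin t) ℂ) :
    Matrix ((Fin n → Fin s) × (Fin n → Fin t)) ((Fin n → Fin s) × (Fin n → Fin t)) ℂ :=
  fun x y => ∏ i, ψ (x.1 i, x.2 i) (y.1 i, y.2 i)

/-- The tensor-product operator `B_σ = ⊗ᵢ B_{σᵢ}`. -/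
noncomputable def basisProd {m k n : ℕ} (B : Fin k → Matrix (Fin m) (Fin m) ℂ)
    (σ : Fin n → Fin k) : Matrix (Fin n → Fin m) (Fin n → Fin m) ℂ :=
  fun x y => ∏ i, B (σ i) (x i) (y i)

/-- Number of nonzero coordinates of `σ`. -/
def suppCard {k n : ℕ} [NeZero k] (σ : Fin n → Fin k) : ℕ :=
  (Finset.univ.filter (fun i => σ i ≠ 0)).card

/-- Squared normalized 2-norm `⦀A⦀₂² = (1/m^n)·Tr(A†A)`. -/
noncomputable def nnormSq {m n : ℕ} (A : Matrix (Fin n → Fin m) (Fin n → Fin m) ℂ) : ℝ :=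
  (1 / (m : ℝ) ^ n) * (Matrix.trace (Aᴴ * A)).re

/-- Low-degree truncation `M^{≤d} = ∑_{|σ| ≤ d} M̂(σ) B_σ`. -/
noncomputable def lowDegreePart {m k n : ℕ} [NeZero k]
    (B : Fin k → Matrix (Fin m) (Fin m) ℂ) (Mhat : (Fin n → Fin k) → ℝ) (d : ℕ) :
    Matrix (Fin n → Fin m) (Fin n → Fin m) ℂ :=
  ∑ σ ∈ Finset.univ.filter (fun σ : Fin n → Fin k => suppCard σ ≤ d),
    Mhat σ • basisProd B σ

/-!
Expanding `M` and `N` in the product bases makes `Tr((M ⊗ N) ψ^{⊗n})` a bilinear form in the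
Fourier coefficients. Its matrix factorizes over the copies,
`Tr((S_σ ⊗ T_τ) ψ^{⊗n}) = ∏ᵢ Tr((S_{σᵢ} ⊗ T_{τᵢ}) ψ)`, so it vanishes unless `σ = τ` and
then equals `c_σ = ∏ᵢ c_{σᵢ} ≤ ρ^{|σ|}`. As `σ = τ` forces equal degrees, the truncation
error only involves diagonal pairs of degree `> d`, each weighted by at most `ρ^d`;
Cauchy–Schwarz and Parseval bound their sum by `ρ^d ⦀M⦀₂ ⦀N⦀₂`.
-/

open Finset Function

theorem trace_mul_eq_sum_sum {R α : Type*} [CommSemiring R] [Fintype α] (A B : Matrix α α R) :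
    trace (A * B) = ∑ x, ∑ y, A x y * B y x := by
  simp [trace, mul_apply]

theorem trace_submatrix_equiv {R α β : Type*} [AddCommMonoid R] [Fintype α] [Fintype β]
    (e : α ≃ β) (A : Matrix β β R) : trace (A.submatrix e e) = trace A :=
  e.sum_comp fun j => A j j

theorem sum_sum_ite_abs_mul_le_sqrt_mul_sqrt {α β γ : Type*} [Fintype α] [Fintype β]
    [DecidableEq γ] {u : α → γ} {v : β → γ} (hu : Injective u) (hv : Injective v)
    (f : α → ℝ) (g : β → ℝ) :
    ∑ a, ∑ b, (if u a = v b then |f a| * |g b| else 0) ≤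
      √(∑ a, f a ^ 2) * √(∑ b, g b ^ 2) := by
  classical
  set E := (univ : Finset (α × β)).filter fun p => u p.1 = v p.2 with hE
  have hEmem : ∀ p ∈ E, u p.1 = v p.2 := fun p hp => (mem_filter.1 hp).2
  have hfst : Set.InjOn Prod.fst (E : Set (α × β)) := fun p hp q hq h =>
    Prod.ext h (hv (by rw [← hEmem p hp, ← hEmem q hq, h]))
  have hsnd : Set.InjOn Prod.snd (E : Set (α × β)) := fun p hp q hq h =>
    Prod.ext (hu (by rw [hEmem p hp, hEmem q hq, h])) h
  have hf : ∑ p ∈ E, |f p.1| ^ 2 ≤ ∑ a, f a ^ 2 := by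
    simp_rw [sq_abs]
    rw [← sum_image (f := fun a => f a ^ 2) hfst]
    exact sum_le_sum_of_subset_of_nonneg (subset_univ _) fun _ _ _ => sq_nonneg _
  have hg : ∑ p ∈ E, |g p.2| ^ 2 ≤ ∑ b, g b ^ 2 := by
    simp_rw [sq_abs]
    rw [← sum_image (f := fun b => g b ^ 2) hsnd]
    exact sum_le_sum_of_subset_of_nonneg (subset_univ _) fun _ _ _ => sq_nonneg _
  calc ∑ a, ∑ b, (if u a = v b then |f a| * |g b| else 0)
      = ∑ p ∈ E, |f p.1| * |g p.2| := by rw [hE, sum_filter, Fintype.sum_prod_type]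
    _ ≤ √(∑ p ∈ E, |f p.1| ^ 2) * √(∑ p ∈ E, |g p.2| ^ 2) := Real.sum_mul_le_sqrt_mul_sqrt _ _ _
    _ ≤ √(∑ a, f a ^ 2) * √(∑ b, g b ^ 2) := by gcongr

section PiKron

variable {ι κ R : Type*} [Fintype ι] [DecidableEq ι] [Fintype κ] [CommSemiring R]

def piKron (P : ι → Matrix κ κ R) : Matrix (ι → κ) (ι → κ) R :=
  of fun x y => ∏ i, P i (x i) (y i)

theorem trace_piKron_mul (P Q : ι → Matrix κ κ R) :
    trace (piKron P * piKron Q) = ∏ i, trace (P i * Q i) := by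
  have hprod : ∀ x y : ι → κ,
      piKron P x y * piKron Q y x = ∏ i, P i (x i) (y i) * Q i (y i) (x i) :=
    fun x y => prod_mul_distrib.symm
  simp_rw [trace_mul_eq_sum_sum, hprod, ← Fintype.sum_prod_type']
  rw [← (Equiv.arrowProdEquivProdArrow ι (fun _ => κ) (fun _ => κ)).sum_comp,
    Fintype.prod_sum fun i (q : κ × κ) => P i q.1 q.2 * Q i q.2 q.1]
  rfl

end PiKron

/-- `S^{⊗n} ⊗ T^{⊗n}` is `(S ⊗ T)^{⊗n}` after regrouping the indices copy by copy. -/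
theorem trace_tensorOp_piKron_mul_tensorPow {s t n : ℕ}
    (ψ : Matrix (Fin s × Fin t) (Fin s × Fin t) ℂ)
    (P : Fin n → Matrix (Fin s) (Fin s) ℂ) (Q : Fin n → Matrix (Fin t) (Fin t) ℂ) :
    trace (tensorOp (piKron P) (piKron Q) * tensorPow ψ) =
      ∏ i, trace (tensorOp (P i) (Q i) * ψ) := by
  let e := (Equiv.arrowProdEquivProdArrow (Fin n) (fun _ => Fin s) (fun _ => Fin t)).symm
  have hop : tensorOp (piKron P) (piKron Q) =
      (piKron fun i => tensorOp (P i) (Q i)).submatrix e e := by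
    ext x y
    simp [tensorOp, piKron, e, Equiv.arrowProdEquivProdArrow, prod_mul_distrib]
  have hpow : tensorPow ψ = (piKron fun _ : Fin n => ψ).submatrix e e := by
    ext x y
    simp [tensorPow, piKron, e, Equiv.arrowProdEquivProdArrow]
  rw [hop, hpow, submatrix_mul_equiv, trace_submatrix_equiv, trace_piKron_mul]

theorem basisProd_eq_piKron {m k n : ℕ} (B : Fin k → Matrix (Fin m) (Fin m) ℂ)
    (σ : Fin n → Fin k) : basisProd B σ = piKron fun i => B (σ i) := rfl

theorem conjTranspose_basisProd {m k n : ℕ} {B : Fin k → Matrix (Fin m) (Fin m) ℂ}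
    (hB : ∀ i, (B i).IsHermitian) (σ : Fin n → Fin k) :
    (basisProd B σ)ᴴ = basisProd B σ := by
  ext x y
  simp only [conjTranspose_apply, basisProd, star_prod]
  exact prod_congr rfl fun i _ => (hB (σ i)).apply (x i) (y i)

theorem tensorOp_sum_smul {α β ι ι' : Type*} [Fintype ι] [Fintype ι']
    (a : ι → ℝ) (b : ι' → ℝ) (A : ι → Matrix α α ℂ) (C : ι' → Matrix β β ℂ) :
    tensorOp (∑ σ, a σ • A σ) (∑ τ, b τ • C τ) =
      ∑ σ, ∑ τ, (a σ * b τ) • tensorOp (A σ) (C τ) := by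
  ext x y
  simp only [tensorOp, Matrix.sum_apply, Matrix.smul_apply, sum_mul_sum, Complex.real_smul,
    Complex.ofReal_mul]
  exact sum_congr rfl fun _ _ => sum_congr rfl fun _ _ => mul_mul_mul_comm _ _ _ _

section ProductBasis

variable {m k n : ℕ}

theorem trace_basisProd_mul_of_orthonormal [NeZero m] {B : Fin k → Matrix (Fin m) (Fin m) ℂ}
    (hB : ∀ i i', (1 / (m : ℂ)) * trace (B i * B i') = if i = i' then 1 else 0)
    (σ τ : Fin n → Fin k) :
    trace (basisProd B σ * basisProd B τ) = if σ = τ then (m : ℂ) ^ n else 0 := by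
  have hB' : ∀ i i', trace (B i * B i') = if i = i' then (m : ℂ) else 0 := fun i i' => by
    rw [← mul_one (m : ℂ), ← mul_zero (m : ℂ), ← mul_ite, ← hB, one_div,
      mul_inv_cancel_left₀ (NeZero.ne (m : ℂ))]
  rw [basisProd_eq_piKron, basisProd_eq_piKron, trace_piKron_mul]
  simp_rw [hB', Fintype.prod_ite_zero, prod_const, card_univ, Fintype.card_fin, ← funext_iff]

theorem nnormSq_sum_smul_basisProd [NeZero m] {B : Fin k → Matrix (Fin m) (Fin m) ℂ}
    (hH : ∀ i, (B i).IsHermitian)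
    (hB : ∀ i i', (1 / (m : ℂ)) * trace (B i * B i') = if i = i' then 1 else 0)
    (f : (Fin n → Fin k) → ℝ) :
    nnormSq (∑ σ, f σ • basisProd B σ) = ∑ σ, f σ ^ 2 := by
  have hA : (∑ σ, f σ • basisProd B σ)ᴴ = ∑ σ, f σ • basisProd B σ := by
    simp only [conjTranspose_sum, conjTranspose_smul, star_trivial, conjTranspose_basisProd hH]
  have htr : trace ((∑ σ, f σ • basisProd B σ) * ∑ σ, f σ • basisProd B σ) =
      (((m : ℝ) ^ n * ∑ σ, f σ ^ 2 : ℝ) : ℂ) := by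
    simp only [sum_mul, mul_sum, smul_mul_smul_comm, trace_sum, trace_smul,
      trace_basisProd_mul_of_orthonormal hB, smul_ite, smul_zero, sum_ite_eq', mem_univ, if_true]
    push_cast
    exact sum_congr rfl fun σ _ => by rw [Complex.real_smul, Complex.ofReal_mul]; ring
  rw [nnormSq, hA, htr, Complex.ofReal_re, one_div,
    inv_mul_cancel_left₀ (pow_ne_zero n (NeZero.ne (m : ℝ)))]

end ProductBasis

section Correlation

variable {s t k l n : ℕ}

/-- `c_σ δ_{στ}` for multi-indices into two bases, whose indices are compared in `ℕ`. -/
def productCorrelation (c : ℕ → ℝ) (σ : Fin n → Fin k) (τ : Fin n → Fin l) : ℝ :=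
  if Fin.val ∘ σ = Fin.val ∘ τ then ∏ i, c (σ i) else 0

variable (ψ : Matrix (Fin s × Fin t) (Fin s × Fin t) ℂ)
  {S : Fin k → Matrix (Fin s) (Fin s) ℂ} {T : Fin l → Matrix (Fin t) (Fin t) ℂ} {c : ℕ → ℝ}

theorem trace_tensorOp_basisProd_mul_tensorPow
    (hcorr : ∀ i j, trace (tensorOp (S i) (T j) * ψ) =
      if (i : ℕ) = (j : ℕ) then ((c i : ℝ) : ℂ) else 0)
    (σ : Fin n → Fin k) (τ : Fin n → Fin l) :
    trace (tensorOp (basisProd S σ) (basisProd T τ) * tensorPow ψ) =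
      (productCorrelation c σ τ : ℂ) := by
  rw [basisProd_eq_piKron, basisProd_eq_piKron, trace_tensorOp_piKron_mul_tensorPow]
  simp_rw [hcorr, Fintype.prod_ite_zero, productCorrelation, funext_iff, Function.comp_apply]
  split_ifs <;> push_cast <;> rfl

theorem trace_tensorOp_sum_basisProd_mul_tensorPow
    (hcorr : ∀ i j, trace (tensorOp (S i) (T j) * ψ) =
      if (i : ℕ) = (j : ℕ) then ((c i : ℝ) : ℂ) else 0)
    (a : (Fin n → Fin k) → ℝ) (b : (Fin n → Fin l) → ℝ) :
    trace (tensorOp (∑ σ, a σ • basisProd S σ) (∑ τ, b τ • basisProd T τ) * tensorPow ψ) =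
      ((∑ σ, ∑ τ, a σ * b τ * productCorrelation c σ τ : ℝ) : ℂ) := by
  simp only [tensorOp_sum_smul, sum_mul, smul_mul, trace_sum, trace_smul,
    trace_tensorOp_basisProd_mul_tensorPow ψ hcorr, Complex.real_smul]
  push_cast
  rfl

end Correlation

section Truncation

variable {k l n : ℕ} [NeZero k] [NeZero l]

def lowDegreeCoeff (f : (Fin n → Fin k) → ℝ) (d : ℕ) (σ : Fin n → Fin k) : ℝ :=
  if suppCard σ ≤ d then f σ else 0

theorem lowDegreePart_eq_sum {m : ℕ} (B : Fin k → Matrix (Fin m) (Fin m) ℂ)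
    (f : (Fin n → Fin k) → ℝ) (d : ℕ) :
    lowDegreePart B f d = ∑ σ, lowDegreeCoeff f d σ • basisProd B σ := by
  simp only [lowDegreePart, sum_filter, lowDegreeCoeff, ite_smul, zero_smul]

theorem suppCard_eq_of_val_comp_eq {σ : Fin n → Fin k} {τ : Fin n → Fin l}
    (h : Fin.val ∘ σ = Fin.val ∘ τ) : suppCard σ = suppCard τ := by
  unfold suppCard
  congr 1
  refine filter_congr fun i _ => ?_
  rw [← Fin.val_ne_zero_iff, ← Fin.val_ne_zero_iff]
  exact congrArg (· ≠ 0) (congrFun h i) |>.to_iff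

theorem prod_le_pow_suppCard {c : ℕ → ℝ} {ρ : ℝ} (hc0 : c 0 = 1) (hcnn : ∀ i, 0 ≤ c i)
    (hcρ : ∀ i, i ≠ 0 → c i ≤ ρ) (σ : Fin n → Fin k) :
    ∏ i, c (σ i) ≤ ρ ^ suppCard σ := by
  calc ∏ i, c (σ i) ≤ ∏ i, if σ i ≠ 0 then ρ else 1 := by
        refine prod_le_prod (fun i _ => hcnn _) fun i _ => ?_
        split_ifs with h
        · exact hcρ _ (Fin.val_ne_zero_iff.2 h)
        · rw [not_not.1 h, Fin.val_zero, hc0]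
    _ = ρ ^ suppCard σ := by rw [prod_ite, prod_const, prod_const_one, mul_one, suppCard]

variable {c : ℕ → ℝ} {ρ : ℝ} (hρ0 : 0 ≤ ρ) (hρ1 : ρ ≤ 1) (hc0 : c 0 = 1) (hcnn : ∀ i, 0 ≤ c i)
  (hcρ : ∀ i, i ≠ 0 → c i ≤ ρ) (a : (Fin n → Fin k) → ℝ) (b : (Fin n → Fin l) → ℝ) (d : ℕ)
include hρ0 hρ1 hc0 hcnn hcρ

/-- Multi-indices with `Fin.val ∘ σ = Fin.val ∘ τ` have the same degree, so only such pairs of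
degree `> d` survive the truncation, each weighted by `c_σ ≤ ρ^{|σ|} ≤ ρ^d`. -/
theorem abs_sub_lowDegreeCoeff_mul_productCorrelation_le (σ : Fin n → Fin k)
    (τ : Fin n → Fin l) :
    |(a σ * b τ - lowDegreeCoeff a d σ * lowDegreeCoeff b d τ) * productCorrelation c σ τ| ≤
      if Fin.val ∘ σ = Fin.val ∘ τ then ρ ^ d * (|a σ| * |b τ|) else 0 := by
  unfold productCorrelation
  split_ifs with hστ
  · by_cases hd : suppCard σ ≤ d
    · have hd' : suppCard τ ≤ d := suppCard_eq_of_val_comp_eq hστ ▸ hd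
      simp only [lowDegreeCoeff, if_pos hd, if_pos hd', sub_self, zero_mul, abs_zero]
      positivity
    · have hprod : ∏ i, c (σ i) ≤ ρ ^ d := (prod_le_pow_suppCard hc0 hcnn hcρ σ).trans
        (pow_le_pow_of_le_one hρ0 hρ1 (not_le.1 hd).le)
      rw [lowDegreeCoeff, if_neg hd, zero_mul, sub_zero, abs_mul, abs_mul,
        abs_of_nonneg (prod_nonneg fun i _ => hcnn _), mul_comm (ρ ^ d)]
      gcongr
  · rw [mul_zero, abs_zero]

theorem abs_sum_sub_lowDegreeCoeff_le :
    |∑ σ, ∑ τ, a σ * b τ * productCorrelation c σ τ -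
        ∑ σ, ∑ τ, lowDegreeCoeff a d σ * lowDegreeCoeff b d τ * productCorrelation c σ τ| ≤
      ρ ^ d * √(∑ σ, a σ ^ 2) * √(∑ τ, b τ ^ 2) := by
  calc _ = |∑ σ, ∑ τ, (a σ * b τ - lowDegreeCoeff a d σ * lowDegreeCoeff b d τ) *
          productCorrelation c σ τ| := by simp only [← sum_sub_distrib, sub_mul]
    _ ≤ ∑ σ, ∑ τ, |(a σ * b τ - lowDegreeCoeff a d σ * lowDegreeCoeff b d τ) *
          productCorrelation c σ τ| :=
        (abs_sum_le_sum_abs _ _).trans (sum_le_sum fun _ _ => abs_sum_le_sum_abs _ _)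
    _ ≤ ∑ σ, ∑ τ, if Fin.val ∘ σ = Fin.val ∘ τ then ρ ^ d * (|a σ| * |b τ|) else 0 := by
        gcongr with σ _ τ _
        exact abs_sub_lowDegreeCoeff_mul_productCorrelation_le hρ0 hρ1 hc0 hcnn hcρ a b d σ τ
    _ = ρ ^ d * ∑ σ, ∑ τ, if Fin.val ∘ σ = Fin.val ∘ τ then |a σ| * |b τ| else 0 := by
        simp only [mul_sum, mul_ite, mul_zero]
    _ ≤ ρ ^ d * (√(∑ σ, a σ ^ 2) * √(∑ τ, b τ ^ 2)) := by
        gcongr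
        exact sum_sum_ite_abs_mul_le_sqrt_mul_sqrt Fin.val_injective.comp_left
          Fin.val_injective.comp_left a b
    _ = ρ ^ d * √(∑ σ, a σ ^ 2) * √(∑ τ, b τ ^ 2) := (mul_assoc _ _ _).symm

end Truncation

theorem degree_truncation_error_bound_general {s t n : ℕ} [NeZero s] [NeZero t]
    (ψ : Matrix (Fin s × Fin t) (Fin s × Fin t) ℂ)
    (ρ : ℝ) (hρ0 : 0 ≤ ρ) (hρ1 : ρ < 1)
    (S : Fin (s ^ 2) → Matrix (Fin s) (Fin s) ℂ)
    (T : Fin (t ^ 2) → Matrix (Fin t) (Fin t) ℂ)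
    (hSH : ∀ i, (S i).IsHermitian) (hTH : ∀ j, (T j).IsHermitian)
    (hSortho : ∀ i i', (1 / (s : ℂ)) * Matrix.trace (S i * S i') = if i = i' then 1 else 0)
    (hTortho : ∀ j j', (1 / (t : ℂ)) * Matrix.trace (T j * T j') = if j = j' then 1 else 0)
    (c : ℕ → ℝ) (hc0 : c 0 = 1) (hcnn : ∀ i, 0 ≤ c i) (hcρ : ∀ i, i ≠ 0 → c i ≤ ρ)
    (hcorr : ∀ (i : Fin (s ^ 2)) (j : Fin (t ^ 2)),
      Matrix.trace (tensorOp (S i) (T j) * ψ) =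
        if (i : ℕ) = (j : ℕ) then ((c (i : ℕ) : ℝ) : ℂ) else 0)
    (Mhat : (Fin n → Fin (s ^ 2)) → ℝ) (Nhat : (Fin n → Fin (t ^ 2)) → ℝ)
    (M : Matrix (Fin n → Fin s) (Fin n → Fin s) ℂ)
    (N : Matrix (Fin n → Fin t) (Fin n → Fin t) ℂ)
    (hM : M = ∑ σ : Fin n → Fin (s ^ 2), Mhat σ • basisProd S σ)
    (hN : N = ∑ τ : Fin n → Fin (t ^ 2), Nhat τ • basisProd T τ)
    (d : ℕ) :
    ‖(Matrix.trace (tensorOp M N * tensorPow ψ) -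
        Matrix.trace (tensorOp (lowDegreePart S Mhat d) (lowDegreePart T Nhat d) *
          tensorPow ψ))‖ ≤
      ρ ^ d * Real.sqrt (nnormSq M) * Real.sqrt (nnormSq N) := by
  subst hM hN
  rw [lowDegreePart_eq_sum, lowDegreePart_eq_sum,
    trace_tensorOp_sum_basisProd_mul_tensorPow ψ hcorr,
    trace_tensorOp_sum_basisProd_mul_tensorPow ψ hcorr, ← Complex.ofReal_sub, Complex.norm_real,
    Real.norm_eq_abs, nnormSq_sum_smul_basisProd hSH hSortho,
    nnormSq_sum_smul_basisProd hTH hTortho]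
  exact abs_sum_sub_lowDegreeCoeff_le hρ0 hρ1.le hc0 hcnn hcρ Mhat Nhat d

/-- Degree truncation lemma: for a noisy MES `ψ` whose correlation coefficients in aligned
standard orthonormal bases satisfy `c_0 = 1` and `0 ≤ c_i ≤ ρ` for `i ≥ 1`, and for
Hermitian `M`, `N` on `n` copies with Fourier coefficients `M̂`, `N̂`,
`|Tr((M ⊗ N)ψ^{⊗n}) − Tr((M^{≤d} ⊗ N^{≤d})ψ^{⊗n})| ≤ ρ^d ⦀M⦀₂ ⦀N⦀₂`. -/
theorem degree_truncation_error_bound {s t n : ℕ} [NeZero s] [NeZero t]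
    (ψ : Matrix (Fin s × Fin t) (Fin s × Fin t) ℂ)
    (hψ : ψ.PosSemidef) (htr : Matrix.trace ψ = 1)
    (hmargS : ptraceT ψ = ((s : ℂ)⁻¹) • (1 : Matrix (Fin s) (Fin s) ℂ))
    (hmargT : ptraceS ψ = ((t : ℂ)⁻¹) • (1 : Matrix (Fin t) (Fin t) ℂ))
    (ρ : ℝ) (hρ0 : 0 ≤ ρ) (hρ1 : ρ < 1)
    (S : Fin (s ^ 2) → Matrix (Fin s) (Fin s) ℂ)
    (T : Fin (t ^ 2) → Matrix (Fin t) (Fin t) ℂ)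
    (hSH : ∀ i, (S i).IsHermitian) (hTH : ∀ j, (T j).IsHermitian)
    (hS0 : S 0 = 1) (hT0 : T 0 = 1)
    (hSortho : ∀ i i', (1 / (s : ℂ)) * Matrix.trace (S i * S i') = if i = i' then 1 else 0)
    (hTortho : ∀ j j', (1 / (t : ℂ)) * Matrix.trace (T j * T j') = if j = j' then 1 else 0)
    (c : ℕ → ℝ) (hc0 : c 0 = 1) (hcnn : ∀ i, 0 ≤ c i) (hcρ : ∀ i, i ≠ 0 → c i ≤ ρ)
    (hcorr : ∀ (i : Fin (s ^ 2)) (j : Fin (t ^ 2)),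
      Matrix.trace (tensorOp (S i) (T j) * ψ) =
        if (i : ℕ) = (j : ℕ) then ((c (i : ℕ) : ℝ) : ℂ) else 0)
    (Mhat : (Fin n → Fin (s ^ 2)) → ℝ) (Nhat : (Fin n → Fin (t ^ 2)) → ℝ)
    (M : Matrix (Fin n → Fin s) (Fin n → Fin s) ℂ)
    (N : Matrix (Fin n → Fin t) (Fin n → Fin t) ℂ)
    (hM : M = ∑ σ : Fin n → Fin (s ^ 2), Mhat σ • basisProd S σ)
    (hN : N = ∑ τ : Fin n → Fin (t ^ 2), Nhat τ • basisProd T τ)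
    (d : ℕ) :
    ‖(Matrix.trace (tensorOp M N * tensorPow ψ) -
        Matrix.trace (tensorOp (lowDegreePart S Mhat d) (lowDegreePart T Nhat d) *
          tensorPow ψ))‖ ≤
      ρ ^ d * Real.sqrt (nnormSq M) * Real.sqrt (nnormSq N) :=
  degree_truncation_error_bound_general ψ ρ hρ0 hρ1 S T hSH hTH hSortho hTortho c hc0 hcnn hcρ hcorr
    Mhat Nhat M N hM hN d
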